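/- Fix an integer n ≥ 2 and let S_n = {0, 1, …, n³ + n²} be the semigroup with operation x ⋆ y = min(x + y, n³ + n²). Define B_n = {n², n² + 1} and C_n = {n², n² + n} as subsets of S_n. Then {h ∈ ℕ : (B_n ∩ C_n)^h = B_n^h ∩ C_n^h} = ℕ \ {n}; that is, for every h ∈ ℕ, the h-fold product set of the intersection equals the intersection of the h-fold product sets if and only if h ≠ n. -/
import Mathlib


open Pointwise

/-- The carrier `S_n = {0, 1, …, n³ + n²}`. -/
structure Tr (n : ℕ) where
  val : ℕ
  le : val ≤ n ^ 3 + n ^ 2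

/-- The semigroup operation `x ⋆ y = min (x + y) (n³ + n²)` on `S_n`. -/
instance (n : ℕ) : Mul (Tr n) :=
  ⟨fun x y => ⟨min (x.val + y.val) (n ^ 3 + n ^ 2), min_le_right _ _⟩⟩

/-- The `h`-fold product set `B^h = {b₁ ⋯ b_h : b₁, …, b_h ∈ B}` for `h ≥ 1`
(the value at `h = 0` is junk). -/
def prodSet {S : Type*} [Mul S] (B : Set S) : ℕ → Set S
  | 0 => ∅
  | 1 => B
  | n + 2 => prodSet B (n + 1) * B

/-- The subset `B_n = {n², n² + 1}` of `S_n`. -/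
def Bset (n : ℕ) : Set (Tr n) := {x | x.val = n ^ 2 ∨ x.val = n ^ 2 + 1}

/-- The subset `C_n = {n², n² + n}` of `S_n`. -/
def Cset (n : ℕ) : Set (Tr n) := {x | x.val = n ^ 2 ∨ x.val = n ^ 2 + n}

lemma Tr.ext' {n : ℕ} {x y : Tr n} (h : x.val = y.val) : x = y := by
  cases x; cases y; simpa using h

lemma Tr.mul_val {n : ℕ} (x y : Tr n) :
    (x * y).val = min (x.val + y.val) (n ^ 3 + n ^ 2) := rfl

lemma prodSet_succ {S : Type*} [Mul S] (B : Set S) {h : ℕ} (hh : 1 ≤ h) :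
    prodSet B (h + 1) = prodSet B h * B := by
  obtain ⟨j, rfl⟩ := Nat.exists_eq_add_of_le' hh
  rfl

lemma prodSet_two {n : ℕ} (a d : ℕ) (hd : a + d ≤ n ^ 3 + n ^ 2) {h : ℕ} (hh : 1 ≤ h) :
    prodSet {x : Tr n | x.val = a ∨ x.val = a + d} h
      = {x : Tr n | ∃ k ≤ h, x.val = min (h * a + k * d) (n ^ 3 + n ^ 2)} := by
  induction h, hh using Nat.le_induction with
  | base =>
    ext x
    have hx := x.le
    simp only [prodSet, Set.mem_setOf_eq]
    constructor
    · rintro (hx' | hx')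
      · exact ⟨0, by omega, by rw [hx']; simp; omega⟩
      · exact ⟨1, le_refl _, by rw [hx']; simp; omega⟩
    · rintro ⟨k, hk, hx'⟩
      interval_cases k <;> simp at hx' <;> omega
  | succ m hm ih =>
    rw [prodSet_succ _ hm, ih]
    ext x
    simp only [Set.mem_mul, Set.mem_setOf_eq]
    constructor
    · rintro ⟨y, ⟨k, hk, hy⟩, z, hz, rfl⟩
      rcases hz with hz | hz
      · refine ⟨k, by omega, ?_⟩
        rw [Tr.mul_val, hy, hz]
        have e : (m + 1) * a + k * d = (m * a + k * d) + a := by ring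
        rw [e]; omega
      · refine ⟨k + 1, by omega, ?_⟩
        rw [Tr.mul_val, hy, hz]
        have e : (m + 1) * a + (k + 1) * d = (m * a + k * d) + (a + d) := by ring
        rw [e]; omega
    · rintro ⟨k, hk, hx⟩
      by_cases hkm : k ≤ m
      · refine ⟨⟨min (m * a + k * d) (n ^ 3 + n ^ 2), min_le_right _ _⟩, ⟨k, hkm, rfl⟩,
          ⟨a, by omega⟩, Or.inl rfl, ?_⟩
        apply Tr.ext'
        rw [Tr.mul_val, hx]
        have e : (m + 1) * a + k * d = (m * a + k * d) + a := by ring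
        rw [e]
        simp only
        omega
      · have hk' : k = m + 1 := by omega
        subst hk'
        refine ⟨⟨min (m * a + m * d) (n ^ 3 + n ^ 2), min_le_right _ _⟩, ⟨m, le_refl _, rfl⟩,
          ⟨a + d, hd⟩, Or.inr rfl, ?_⟩
        apply Tr.ext'
        rw [Tr.mul_val, hx]
        have e : (m + 1) * a + (m + 1) * d = (m * a + m * d) + (a + d) := by ring
        rw [e]
        simp only
        omega

/-- For `n ≥ 2`, `{h ∈ ℕ : (B_n ∩ C_n)^h = B_n^h ∩ C_n^h} = ℕ \ {n}`: for every
`h ∈ ℕ = {1, 2, …}`, the `h`-fold product set of the intersection equals the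
intersection of the `h`-fold product sets if and only if `h ≠ n`. -/
theorem stmt_18 (n : ℕ) (hn : 2 ≤ n) :
    {h : ℕ | 1 ≤ h ∧ prodSet (Bset n ∩ Cset n) h = prodSet (Bset n) h ∩ prodSet (Cset n) h}
      = {h : ℕ | 1 ≤ h ∧ h ≠ n} := by
  have hBC : Bset n ∩ Cset n = {x : Tr n | x.val = n ^ 2 ∨ x.val = n ^ 2 + 0} := by
    ext x
    simp only [Bset, Cset, Set.mem_inter_iff, Set.mem_setOf_eq]
    omega
  have hB : Bset n = {x : Tr n | x.val = n ^ 2 ∨ x.val = n ^ 2 + 1} := rfl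
  have hC : Cset n = {x : Tr n | x.val = n ^ 2 ∨ x.val = n ^ 2 + n} := rfl
  have h0 : n ^ 2 + 0 ≤ n ^ 3 + n ^ 2 := by omega
  have h1 : n ^ 2 + 1 ≤ n ^ 3 + n ^ 2 := by nlinarith
  have h2 : n ^ 2 + n ≤ n ^ 3 + n ^ 2 := by nlinarith
  ext h
  simp only [Set.mem_setOf_eq]
  refine and_congr_right fun hh => ?_
  rw [hBC, hB, hC, prodSet_two _ _ h0 hh, prodSet_two _ _ h1 hh, prodSet_two _ _ h2 hh]
  constructor
  · intro heq heqn
    rw [heqn] at heq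
    -- h = n : derive a contradiction using the element n³ + n
    have hnle : n ^ 3 + n ≤ n ^ 3 + n ^ 2 := by nlinarith
    have hnn : n * n ^ 2 = n ^ 3 := by ring
    have hx : (⟨n ^ 3 + n, hnle⟩ : Tr n) ∈
        {x : Tr n | ∃ k ≤ n, x.val = min (n * n ^ 2 + k * 1) (n ^ 3 + n ^ 2)} ∩
        {x : Tr n | ∃ k ≤ n, x.val = min (n * n ^ 2 + k * n) (n ^ 3 + n ^ 2)} := by
      constructor
      · exact ⟨n, le_refl _, by simp only; omega⟩
      · exact ⟨1, by omega, by simp only; omega⟩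
    rw [← heq] at hx
    obtain ⟨k, hk, hv⟩ := hx
    simp only at hv
    omega
  · intro hne
    rcases lt_or_gt_of_ne hne with hlt | hgt
    · -- h < n : no truncation, intersection is the singleton {h n²}
      have hb1 : h * n ^ 2 + h * n ≤ n ^ 3 + n ^ 2 := by nlinarith
      ext x
      simp only [Set.mem_setOf_eq, Set.mem_inter_iff]
      constructor
      · rintro ⟨k, hk, hx⟩
        have hx' : x.val = h * n ^ 2 := by omega
        constructor
        · exact ⟨0, by omega, by omega⟩
        · exact ⟨0, by omega, by omega⟩
      · rintro ⟨⟨k, hk, hx⟩, ⟨k', hk', hx'⟩⟩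
        have hknn : k' * n ≤ h * n := Nat.mul_le_mul_right n hk'
        have hk0 : k' = 0 := by
          by_contra hk0
          have : n ≤ k' * n := Nat.le_mul_of_pos_left n (by omega)
          omega
        subst hk0
        exact ⟨0, by omega, by omega⟩
    · -- h > n : everything is truncated to n³ + n²
      have hb : n ^ 3 + n ^ 2 ≤ h * n ^ 2 := by nlinarith
      ext x
      simp only [Set.mem_setOf_eq, Set.mem_inter_iff]
      constructor
      · rintro ⟨k, hk, hx⟩
        exact ⟨⟨0, by omega, by omega⟩, ⟨0, by omega, by omega⟩⟩
      · rintro ⟨⟨k, hk, hx⟩, -⟩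
        exact ⟨0, by omega, by omega⟩
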